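/- Let ν > 0 and 0 ≤ b < a. Then lim_{t→∞} t^ν I(t) = C_ν. -/

import Mathlib

open MeasureTheory Filter

/-! For `s > t` the factor `exp (-x²/(2s))` lies between `exp (-x²/(2t))` and `1`, so the tail
integral `∫_t^∞ s^{-(ν+1)} exp (-x²/(2s)) ds` is squeezed between `exp (-x²/(2t)) t^{-ν}/ν` and
`t^{-ν}/ν`; hence `t^ν F_ν(x,t) → x^{2ν}/(2^ν ν Γ(ν)) = x^{2ν}/(2^ν Γ(ν+1))`. In particular
`F_ν(x,t) → 0`, so the denominator of `I(t)` tends to `1` and the limit is the difference of the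
two numerator limits. -/

/-- `F ν x t = (x^{2ν}/(2^ν Γ(ν))) ∫_t^∞ s^{-(ν+1)} exp(-x²/(2s)) ds`. -/
noncomputable def F (ν x t : ℝ) : ℝ :=
  (x ^ (2 * ν) / (2 ^ ν * Real.Gamma ν)) *
    ∫ s in Set.Ioi t, s ^ (-(ν + 1)) * Real.exp (-x ^ 2 / (2 * s))

section TailIntegral

variable {ν t : ℝ}

lemma exp_neg_sq_div_le_one (x : ℝ) {s : ℝ} (hs : 0 ≤ s) : Real.exp (-x ^ 2 / (2 * s)) ≤ 1 :=
  Real.exp_le_one_iff.2 (div_nonpos_of_nonpos_of_nonneg (by nlinarith) (by positivity))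

lemma exp_neg_sq_div_le_of_le (x : ℝ) {s : ℝ} (ht : 0 < t) (hts : t ≤ s) :
    Real.exp (-x ^ 2 / (2 * t)) ≤ Real.exp (-x ^ 2 / (2 * s)) := by
  rw [Real.exp_le_exp, neg_div, neg_div, neg_le_neg_iff]
  exact div_le_div_of_nonneg_left (sq_nonneg x) (by positivity) (by linarith)

lemma integral_Ioi_rpow_neg_add_one (hν : 0 < ν) (ht : 0 < t) :
    ∫ s in Set.Ioi t, s ^ (-(ν + 1)) = t ^ (-ν) / ν := by
  rw [integral_Ioi_rpow_of_lt (by linarith) ht, show -(ν + 1) + 1 = -ν by ring, neg_div, div_neg,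
    neg_neg]

lemma integrableOn_Ioi_rpow_neg_add_one (hν : 0 < ν) (ht : 0 < t) :
    IntegrableOn (fun s : ℝ => s ^ (-(ν + 1))) (Set.Ioi t) :=
  integrableOn_Ioi_rpow_of_lt (by linarith) ht

lemma integrableOn_Ioi_rpow_mul_exp (x : ℝ) (hν : 0 < ν) (ht : 0 < t) :
    IntegrableOn (fun s : ℝ => s ^ (-(ν + 1)) * Real.exp (-x ^ 2 / (2 * s))) (Set.Ioi t) := by
  refine (integrableOn_Ioi_rpow_neg_add_one hν ht).mono' (by fun_prop) ?_
  filter_upwards [ae_restrict_mem measurableSet_Ioi] with s hs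
  have hs0 : 0 ≤ s := (ht.trans hs).le
  rw [Real.norm_of_nonneg (by positivity)]
  exact mul_le_of_le_one_right (Real.rpow_nonneg hs0 _) (exp_neg_sq_div_le_one x hs0)

lemma integral_Ioi_rpow_mul_exp_mem_Icc (x : ℝ) (hν : 0 < ν) (ht : 0 < t) :
    ∫ s in Set.Ioi t, s ^ (-(ν + 1)) * Real.exp (-x ^ 2 / (2 * s)) ∈
      Set.Icc (Real.exp (-x ^ 2 / (2 * t)) * (t ^ (-ν) / ν)) (t ^ (-ν) / ν) := by
  rw [← integral_Ioi_rpow_neg_add_one hν ht, ← integral_const_mul]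
  have hint := integrableOn_Ioi_rpow_mul_exp x hν ht
  have hpow := integrableOn_Ioi_rpow_neg_add_one hν ht
  constructor
  · refine setIntegral_mono_on (hpow.const_mul _) hint measurableSet_Ioi fun s hs => ?_
    rw [mul_comm]
    exact mul_le_mul_of_nonneg_left (exp_neg_sq_div_le_of_le x ht (le_of_lt hs))
      (Real.rpow_nonneg (ht.trans hs).le _)
  · refine setIntegral_mono_on hint hpow measurableSet_Ioi fun s hs => ?_
    exact mul_le_of_le_one_right (Real.rpow_nonneg (ht.trans hs).le _)
      (exp_neg_sq_div_le_one x (ht.trans hs).le)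

lemma tendsto_rpow_mul_integral_Ioi_rpow_mul_exp (x : ℝ) (hν : 0 < ν) :
    Tendsto (fun t : ℝ => t ^ ν *
      ∫ s in Set.Ioi t, s ^ (-(ν + 1)) * Real.exp (-x ^ 2 / (2 * s))) atTop (nhds ν⁻¹) := by
  have hscale : ∀ t : ℝ, 0 < t → ∀ c : ℝ, t ^ ν * (c * (t ^ (-ν) / ν)) = c / ν := by
    intro t ht c
    rw [Real.rpow_neg ht.le]
    field_simp [(Real.rpow_pos_of_pos ht ν).ne']
  have hexp : Tendsto (fun t : ℝ => Real.exp (-x ^ 2 / (2 * t)) / ν) atTop (nhds ν⁻¹) := by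
    have h0 : Tendsto (fun t : ℝ => -x ^ 2 / (2 * t)) atTop (nhds 0) :=
      tendsto_const_nhds.div_atTop (tendsto_id.const_mul_atTop two_pos)
    have h1 : Tendsto (fun t : ℝ => Real.exp (-x ^ 2 / (2 * t))) atTop (nhds 1) := by
      simpa only [Real.exp_zero, Function.comp_def] using (Real.continuous_exp.tendsto 0).comp h0
    simpa only [one_div] using h1.div_const ν
  refine tendsto_of_tendsto_of_tendsto_of_le_of_le' hexp tendsto_const_nhds ?_ ?_ <;>
    filter_upwards [eventually_gt_atTop 0] with t ht <;>
    have hmem := integral_Ioi_rpow_mul_exp_mem_Icc x hν ht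
  · rw [← hscale t ht]
    exact mul_le_mul_of_nonneg_left hmem.1 (Real.rpow_nonneg ht.le _)
  · rw [← one_div, ← hscale t ht 1, one_mul]
    exact mul_le_mul_of_nonneg_left hmem.2 (Real.rpow_nonneg ht.le _)

end TailIntegral

lemma tendsto_rpow_mul_F (ν x : ℝ) (hν : 0 < ν) :
    Tendsto (fun t : ℝ => t ^ ν * F ν x t) atTop
      (nhds (x ^ (2 * ν) / (2 ^ ν * Real.Gamma (ν + 1)))) := by
  have hlim : x ^ (2 * ν) / (2 ^ ν * Real.Gamma (ν + 1)) =
      x ^ (2 * ν) / (2 ^ ν * Real.Gamma ν) * ν⁻¹ := by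
    rw [Real.Gamma_add_one hν.ne']
    ring
  rw [hlim]
  refine ((tendsto_rpow_mul_integral_Ioi_rpow_mul_exp x hν).const_mul _).congr fun t => ?_
  simp only [F]
  ring

lemma tendsto_F_atTop (ν x : ℝ) (hν : 0 < ν) : Tendsto (F ν x) atTop (nhds 0) := by
  have h := (tendsto_rpow_neg_atTop hν).mul (tendsto_rpow_mul_F ν x hν)
  rw [zero_mul] at h
  refine h.congr' ?_
  filter_upwards [eventually_gt_atTop 0] with t ht
  rw [← mul_assoc, ← Real.rpow_add ht, neg_add_cancel, Real.rpow_zero, one_mul]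

theorem stmt_13 (ν a b : ℝ) (hν : 0 < ν) :
    Tendsto (fun t : ℝ => t ^ ν * ((F ν a t - F ν b t) / (1 - F ν b t))) atTop
      (nhds ((a ^ (2 * ν) - b ^ (2 * ν)) / (2 ^ ν * Real.Gamma (ν + 1)))) := by
  have hnum := (tendsto_rpow_mul_F ν a hν).sub (tendsto_rpow_mul_F ν b hν)
  have hden : Tendsto (fun t : ℝ => 1 - F ν b t) atTop (nhds 1) := by
    simpa only [sub_zero] using (tendsto_F_atTop ν b hν).const_sub 1
  rw [sub_div, ← div_one (_ - _)]
  refine (hnum.div hden one_ne_zero).congr fun t => ?_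
  simp only [Pi.div_apply]
  ring
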